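/- arXiv:0704.0412 — 2 statements merged into one kernel-verified Lean document; each statement's English description precedes it below -/
import Mathlib

section
/- Let G be a finite group and u a torsion unit in V(ZG) of order n. Let s be a natural number coprime to n with st ≡ 1 (mod n). Then for every x in G whose order divides n, the partial augmentations satisfy ε_x(u^s) = ε_{x^t}(u). -/
open scoped Classical

/-- The partial augmentation of `u ∈ ℤG` at (the conjugacy class of) `x ∈ G`. -/
noncomputable def partialAug {G : Type*} [Group G] [Fintype G]
    (x : G) (u : MonoidAlgebra ℤ G) : ℤ :=
  ∑ g : G, if IsConj x g then u.coeff g else 0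

/-- The augmentation ring homomorphism `ℤG → ℤ`. -/
noncomputable def augMap (G : Type*) [Group G] : MonoidAlgebra ℤ G →+* ℤ :=
  MonoidAlgebra.liftNCRingHom (RingHom.id ℤ) (1 : G →* ℤ) (fun _ _ => Commute.all _ _)

/-- `V(ℤG)`, the group of units of augmentation one in `ℤG`. -/
noncomputable def V (G : Type*) [Group G] : Subgroup (MonoidAlgebra ℤ G)ˣ :=
  (Units.map (augMap G).toMonoidHom).ker

/-!
Put `y = x ^ t`, so that `y ^ s = x` and `x`, `y` have the same centralizer. The `ℤ`-linear
endomorphism `E : a ↦ u * a * y⁻¹` of `ℤG` has trace `∑ g, u(g y g⁻¹) = |C_G(y)| ε_y(u)`, and its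
power `E ^ s : a ↦ u ^ s * a * x⁻¹` has trace `|C_G(x)| ε_x(u ^ s)`. Since `E ^ n = 1`, it remains
to see that an integral matrix `M` with `M ^ n = 1` satisfies `tr (M ^ s) = tr M`: over `ℚ̄`, `M` is
diagonalizable with eigenvalues `n`-th roots of unity, and a Galois automorphism sending every
`n`-th root of unity `μ` to `μ ^ s` maps `tr M`, the sum of the eigenvalues, to `tr (M ^ s)`,
while it fixes the rational number `tr M`.
-/

open Polynomial Module Finset

theorem exists_algEquiv_apply_eq_pow_of_coprime {K : Type*} [Field K] [Algebra ℚ K]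
    [IsAlgClosure ℚ K] {n s : ℕ} [NeZero n] (hs : s.Coprime n) :
    ∃ σ : K ≃ₐ[ℚ] K, ∀ μ : K, μ ^ n = 1 → σ μ = μ ^ s := by
  have := IsAlgClosure.isAlgClosed ℚ (K := K)
  have : CharZero K := charZero_of_injective_algebraMap (algebraMap ℚ K).injective
  obtain ⟨ζ, hζ⟩ := IsAlgClosed.exists_root (cyclotomic n K)
    (degree_cyclotomic_pos n K (NeZero.pos n)).ne'
  replace hζ : IsPrimitiveRoot ζ n := isRoot_cyclotomic_iff.mp hζ
  have hmin : minpoly ℚ ζ = cyclotomic n ℚ :=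
    (hζ.minpoly_eq_cyclotomic_of_irreducible (cyclotomic.irreducible_rat (NeZero.pos n))).symm
  obtain ⟨σ, hσ⟩ := minpoly.exists_algEquiv_of_root' (Algebra.IsAlgebraic.isAlgebraic ζ)
    (x := ζ ^ s) (by
      rw [hmin, aeval_def, ← eval_map, map_cyclotomic]
      exact (hζ.pow_of_coprime s hs).isRoot_cyclotomic (NeZero.pos n))
  refine ⟨σ, fun μ hμ => ?_⟩
  obtain ⟨k, -, rfl⟩ := hζ.eq_pow_of_pow_eq_one hμ
  rw [map_pow, hσ, ← pow_mul, ← pow_mul, mul_comm]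

namespace Module.End

variable {K V : Type*} [Field K] [AddCommGroup V] [Module K V] {f : End K V}

theorem pow_apply_of_mem_eigenspace {μ : K} {v : V} (hv : v ∈ f.eigenspace μ) (k : ℕ) :
    (f ^ k) v = μ ^ k • v := by
  obtain rfl | hv₀ := eq_or_ne v 0
  · simp
  · exact HasEigenvector.pow_apply ⟨hv, hv₀⟩ k

theorem HasEigenvalue.pow_eq_one {μ : K} (hμ : f.HasEigenvalue μ) {n : ℕ} (hf : f ^ n = 1) :
    μ ^ n = 1 := by
  obtain ⟨v, hv⟩ := hμ.exists_hasEigenvector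
  have hv' := hv.pow_apply n
  rw [hf, one_apply] at hv'
  exact smul_left_injective K hv.2 (by simpa using hv'.symm)

theorem isSemisimple_of_pow_eq_one [CharZero K] {n : ℕ} (hn : n ≠ 0) (hf : f ^ n = 1) :
    f.IsSemisimple :=
  isSemisimple_of_squarefree_aeval_eq_zero
    (separable_X_pow_sub_C (1 : K) (Nat.cast_ne_zero.mpr hn) one_ne_zero).squarefree
    (by simp [hf])

theorem trace_pow_eq_sum_eigenvalues [IsAlgClosed K] [FiniteDimensional K V]
    (hf : f.IsSemisimple) (k : ℕ) :
    LinearMap.trace K V (f ^ k) =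
      ∑ μ : f.Eigenvalues, (finrank K (f.eigenspace μ) : K) * μ ^ k := by
  have hint : DirectSum.IsInternal fun μ : f.Eigenvalues => f.eigenspace μ :=
    DirectSum.isInternal_ne_bot_iff.mpr <|
      DirectSum.isInternal_submodule_of_iSupIndep_of_iSup_eq_top f.eigenspaces_iSupIndep
        hf.iSup_eigenspace_eq_top
  have hmaps (μ : K) : Set.MapsTo (f ^ k) (f.eigenspace μ) (f.eigenspace μ) :=
    mapsTo_genEigenspace_of_comm (Commute.pow_right rfl k) μ 1
  rw [LinearMap.trace_eq_sum_trace_restrict hint fun μ => hmaps μ]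
  refine sum_congr rfl fun μ _ => ?_
  have hrestrict : (f ^ k).restrict (hmaps μ) = (μ : K) ^ k • 1 := by
    ext ⟨v, hv⟩
    exact pow_apply_of_mem_eigenspace hv k
  rw [hrestrict, map_smul, LinearMap.trace_one, smul_eq_mul, mul_comm]

end Module.End

theorem Matrix.trace_pow_eq_trace_of_coprime {d : Type*} [Fintype d] [DecidableEq d] {n s : ℕ}
    (M : Matrix d d ℚ) (hM : M ^ n = 1) (hs : s.Coprime n) : (M ^ s).trace = M.trace := by
  obtain rfl | hn := eq_or_ne n 0
  · rw [Nat.coprime_zero_right s |>.mp hs, pow_one]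
  have : NeZero n := ⟨hn⟩
  -- The global instance is stated for `AlgebraicClosure.instAlgebra`, which is not reducibly
  -- equal to the `ℚ`-algebra structure `DivisionRing.toRatAlgebra` found by instance search.
  have : IsAlgClosure ℚ (AlgebraicClosure ℚ) := AlgebraicClosure.instIsAlgClosure ℚ
  let f : End (AlgebraicClosure ℚ) (d → AlgebraicClosure ℚ) :=
    toLinAlgEquiv' (M.map (algebraMap ℚ (AlgebraicClosure ℚ)))
  have htrace (k : ℕ) : LinearMap.trace _ _ (f ^ k) = algebraMap ℚ _ (M ^ k).trace := by
    rw [← map_pow, ← Matrix.map_pow, AddMonoidHom.map_trace]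
    exact trace_toLin'_eq _
  have hf : f ^ n = 1 := by
    rw [← map_pow, ← Matrix.map_pow, hM, Matrix.map_one _ (map_zero _) (map_one _), map_one]
  have hss := End.isSemisimple_of_pow_eq_one hn hf
  obtain ⟨σ, hσ⟩ := exists_algEquiv_apply_eq_pow_of_coprime (K := AlgebraicClosure ℚ) hs
  apply (algebraMap ℚ (AlgebraicClosure ℚ)).injective
  rw [← htrace, ← pow_one M, ← htrace]
  calc LinearMap.trace _ _ (f ^ s)
      = ∑ μ : f.Eigenvalues, (finrank _ (f.eigenspace μ) : AlgebraicClosure ℚ) * σ μ := by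
        rw [End.trace_pow_eq_sum_eigenvalues hss]
        exact sum_congr rfl fun μ _ => by rw [hσ μ (End.HasEigenvalue.pow_eq_one μ.2 hf)]
    _ = σ (LinearMap.trace _ _ (f ^ 1)) := by
        rw [End.trace_pow_eq_sum_eigenvalues hss 1, map_sum]
        simp only [map_mul, map_natCast, pow_one]
    _ = LinearMap.trace _ _ (f ^ 1) := by rw [htrace, AlgEquiv.commutes]

theorem Module.End.trace_pow_eq_trace_of_coprime {M : Type*} [AddCommGroup M] [Module.Free ℤ M]
    [Module.Finite ℤ M] {n s : ℕ} {f : End ℤ M} (hf : f ^ n = 1) (hs : s.Coprime n) :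
    LinearMap.trace ℤ M (f ^ s) = LinearMap.trace ℤ M f := by
  let b := Module.Free.chooseBasis ℤ M
  let A := (LinearMap.toMatrixAlgEquiv b f).map (Int.castRingHom ℚ)
  have hA : A ^ n = 1 := by
    rw [← Matrix.map_pow, ← map_pow, hf, map_one, Matrix.map_one _ (map_zero _) (map_one _)]
  have hAs := Matrix.trace_pow_eq_trace_of_coprime A hA hs
  rw [← Matrix.map_pow, ← map_pow, ← AddMonoidHom.map_trace, ← AddMonoidHom.map_trace] at hAs
  rw [LinearMap.trace_eq_matrix_trace ℤ b, LinearMap.trace_eq_matrix_trace ℤ b]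
  exact Int.cast_injective hAs

section Group

variable {G : Type*} [Group G]

theorem pow_pow_eq_self_of_mul_modEq_one {x : G} {n s t : ℕ} (hx : orderOf x ∣ n)
    (hst : s * t ≡ 1 [MOD n]) : (x ^ t) ^ s = x :=
  calc (x ^ t) ^ s = x ^ (s * t) := by rw [← pow_mul, mul_comm]
    _ = x ^ 1 := pow_eq_pow_iff_modEq.mpr (hst.of_dvd hx)
    _ = x := pow_one x

theorem Subgroup.centralizer_singleton_eq_of_pow_eq {x y : G} {s t : ℕ} (hx : y ^ s = x)
    (hy : x ^ t = y) : centralizer {x} = centralizer {y} := by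
  ext g
  simp only [mem_centralizer_singleton_iff]
  exact ⟨fun h => hy ▸ Commute.pow_right h t, fun h => hx ▸ Commute.pow_right h s⟩

theorem card_filter_conj_eq_card_centralizer [Fintype G] (y c : G) :
    #{g | g * y * g⁻¹ = c * y * c⁻¹} = Nat.card (Subgroup.centralizer {y}) := by
  rw [← Fintype.card_subtype, Nat.card_eq_fintype_card]
  refine Fintype.card_congr (Equiv.subtypeEquiv (Equiv.mulLeft c⁻¹) fun g => ?_)
  rw [Subgroup.mem_centralizer_singleton_iff, Equiv.coe_mulLeft, mul_inv_eq_iff_eq_mul,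
    mul_assoc c, mul_assoc c, ← inv_mul_eq_iff_eq_mul (a := c)]
  simp only [mul_assoc]

theorem sum_coeff_conj_eq_card_centralizer_mul_partialAug [Fintype G] (v : MonoidAlgebra ℤ G)
    (y : G) :
    ∑ g, v.coeff (g * y * g⁻¹) = Nat.card (Subgroup.centralizer {y}) * partialAug y v := by
  rw [partialAug, mul_sum, ← sum_fiberwise univ (fun g => g * y * g⁻¹)]
  refine sum_congr rfl fun h _ => ?_
  rw [sum_congr rfl fun g hg => by rw [(mem_filter.mp hg).2], sum_const, nsmul_eq_mul]
  split_ifs with hconj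
  · obtain ⟨c, rfl⟩ := isConj_iff.mp hconj
    rw [card_filter_conj_eq_card_centralizer]
  · rw [filter_false_of_mem fun g _ hg => hconj (isConj_iff.mpr ⟨g, hg⟩)]
    simp

end Group

namespace MonoidAlgebra

variable {R G : Type*} [CommRing R] [Group G]

noncomputable def mulLeftRightInv (v : MonoidAlgebra R G) (y : G) :
    Module.End R (MonoidAlgebra R G) :=
  LinearMap.mulLeft R v * LinearMap.mulRight R (single y⁻¹ 1)

theorem mulLeftRightInv_pow (v : MonoidAlgebra R G) (y : G) (k : ℕ) :
    mulLeftRightInv v y ^ k = mulLeftRightInv (v ^ k) (y ^ k) := by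
  rw [mulLeftRightInv, (LinearMap.commute_mulLeft_right _ _).mul_pow, LinearMap.pow_mulLeft,
    LinearMap.pow_mulRight, single_pow, one_pow, inv_pow, mulLeftRightInv]

theorem mulLeftRightInv_one_one : mulLeftRightInv (1 : MonoidAlgebra R G) 1 = 1 := by
  rw [mulLeftRightInv, inv_one, ← one_def, LinearMap.mulLeft_one, LinearMap.mulRight_one,
    ← Module.End.one_eq_id, mul_one]

theorem trace_mulLeftRightInv [Fintype G] (v : MonoidAlgebra R G) (y : G) :
    LinearMap.trace R _ (mulLeftRightInv v y) = ∑ g, v.coeff (g * y * g⁻¹) := by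
  rw [LinearMap.trace_eq_matrix_trace R (MonoidAlgebra.basis G R)]
  refine sum_congr rfl fun g _ => ?_
  simp only [mulLeftRightInv, Matrix.diag_apply, LinearMap.toMatrix_apply, basis_apply,
    End.mul_apply, LinearMap.mulRight_apply, LinearMap.mulLeft_apply, single_mul_single, mul_one]
  show (v * single (g * y⁻¹) 1).coeff g = _
  rw [coeff_mul_single_apply, mul_one, mul_inv_rev, inv_inv, mul_assoc]

end MonoidAlgebra

theorem stmt5_general {G : Type*} [Group G] [Fintype G] (u : (MonoidAlgebra ℤ G)ˣ)
    {n : ℕ} (hn : orderOf u = n)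
    (s t : ℕ) (hs : Nat.Coprime s n) (hst : s * t ≡ 1 [MOD n])
    (x : G) (hx : orderOf x ∣ n) :
    partialAug x ((u ^ s : (MonoidAlgebra ℤ G)ˣ) : MonoidAlgebra ℤ G)
      = partialAug (x ^ t) (u : MonoidAlgebra ℤ G) := by
  set y := x ^ t
  have hyx : y ^ s = x := pow_pow_eq_self_of_mul_modEq_one hx hst
  have hyn : y ^ n = 1 := by
    rw [← pow_mul, mul_comm, pow_mul, orderOf_dvd_iff_pow_eq_one.mp hx, one_pow]
  have hun : (u : MonoidAlgebra ℤ G) ^ n = 1 := by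
    rw [← Units.val_pow_eq_pow_val, ← hn, pow_orderOf_eq_one, Units.val_one]
  have hE : MonoidAlgebra.mulLeftRightInv (u : MonoidAlgebra ℤ G) y ^ n = 1 := by
    rw [MonoidAlgebra.mulLeftRightInv_pow, hun, hyn, MonoidAlgebra.mulLeftRightInv_one_one]
  have key := Module.End.trace_pow_eq_trace_of_coprime hE hs
  rw [MonoidAlgebra.mulLeftRightInv_pow, ← Units.val_pow_eq_pow_val] at key
  simp only [MonoidAlgebra.trace_mulLeftRightInv,
    sum_coeff_conj_eq_card_centralizer_mul_partialAug] at key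
  rw [hyx, Subgroup.centralizer_singleton_eq_of_pow_eq hyx rfl] at key
  exact mul_left_cancel₀ (Nat.cast_ne_zero.mpr Nat.card_pos.ne') key

/-- For a torsion unit `u ∈ V(ℤG)` of order `n` and `s` coprime to `n` with
`s * t ≡ 1 (mod n)`, the partial augmentations satisfy
`ε_x(u^s) = ε_{x^t}(u)` for all `x ∈ G` of order dividing `n`. -/
theorem stmt5 {G : Type*} [Group G] [Fintype G] (u : (MonoidAlgebra ℤ G)ˣ)
    (hu : u ∈ V G) {n : ℕ} (hn : orderOf u = n)
    (s t : ℕ) (hs : Nat.Coprime s n) (hst : s * t ≡ 1 [MOD n])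
    (x : G) (hx : orderOf x ∣ n) :
    partialAug x ((u ^ s : (MonoidAlgebra ℤ G)ˣ) : MonoidAlgebra ℤ G)
      = partialAug (x ^ t) (u : MonoidAlgebra ℤ G) :=
  stmt5_general u hn s t hs hst x hx
end

section
/- Let G be a finite group. The order of any finite subgroup of V(ZG) divides the order of G. -/
/-!
A unit `v` of finite order `m` of a complex algebra splits as `v = ∑ ζ ^ j • e j` along the
idempotents `e j = m⁻¹ • ∑ l < m, (ζ ^ (-j) • v) ^ l`, `ζ` a primitive `m`-th root of unity.
In `kG` the trace of left multiplication by an idempotent `e` is `|G| • e.coeff 1`, and it is the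
rank of `e`; so `e.coeff 1 ≥ 0`, with equality only for `e = 0`. Hence `v.coeff 1` is a convex
combination of roots of unity: `‖v.coeff 1‖ ≤ 1`, with equality only for a scalar `v`. For a
torsion unit `u` of `ℤG` this is the Berman–Higman theorem: `u.coeff 1 = 0` unless `u = ±1`.
For a finite subgroup `H` of `V(ℤG)` it follows that `|H|⁻¹ • ∑ h ∈ H, h` is an idempotent of
`ℚG` with coefficient `|H|⁻¹` at `1`, so `|G| / |H|` is its rank, an integer.
-/

open scoped Classical

open Finset LinearMap MonoidAlgebra ComplexConjugate ComplexOrder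

section EigenProj

variable {K A : Type*} [Field K] [Ring A] [Algebra K A]

theorem isIdempotentElem_inv_natCast_smul {s : A} {n : ℕ} (hn : (n : K) ≠ 0)
    (h : s * s = n • s) : IsIdempotentElem ((n : K)⁻¹ • s) := by
  rw [IsIdempotentElem, smul_mul_smul_comm, h, ← Nat.cast_smul_eq_nsmul K, smul_smul, mul_assoc,
    inv_mul_cancel₀ hn, mul_one]

theorem mul_geom_sum_of_pow_eq_one {w : A} {m : ℕ} (hw : w ^ m = 1) :
    w * ∑ l ∈ range m, w ^ l = ∑ l ∈ range m, w ^ l := by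
  have h := mul_geom_sum w m
  rwa [hw, sub_self, sub_mul, one_mul, sub_eq_zero] at h

theorem geom_sum_mul_self_of_pow_eq_one {w : A} {m : ℕ} (hw : w ^ m = 1) :
    (∑ l ∈ range m, w ^ l) * ∑ l ∈ range m, w ^ l = m • ∑ l ∈ range m, w ^ l := by
  have hfix : ∀ l, w ^ l * ∑ i ∈ range m, w ^ i = ∑ i ∈ range m, w ^ i := fun l => by
    simpa only [Function.IsFixedPt, mul_left_iterate] using
      Function.IsFixedPt.iterate (f := (w * ·)) (mul_geom_sum_of_pow_eq_one hw) l
  rw [sum_mul, sum_congr rfl fun l _ => hfix l, sum_const, card_range]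

theorem IsPrimitiveRoot.geom_sum_pow_eq_zero {ω : K} {m l : ℕ} (hω : IsPrimitiveRoot ω m)
    (hl0 : l ≠ 0) (hlm : l < m) : ∑ j ∈ range m, (ω ^ l) ^ j = 0 := by
  rw [geom_sum_eq (hω.pow_ne_one_of_pos_of_lt hl0 hlm), ← pow_mul, mul_comm, pow_mul,
    hω.pow_eq_one, one_pow, sub_self, zero_div]

/-- When `v ^ m = 1` and `ζ ^ m = 1`, the projection onto the `ζ`-eigenspace of left
multiplication by `v`. -/
noncomputable def eigenProj (m : ℕ) (ζ : K) (v : A) : A :=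
  (m : K)⁻¹ • ∑ l ∈ range m, (ζ⁻¹ • v) ^ l

variable {m : ℕ} {ζ ω : K} {v : A}

theorem isIdempotentElem_eigenProj (hm : (m : K) ≠ 0) (hv : v ^ m = 1) (hζ : ζ ^ m = 1) :
    IsIdempotentElem (eigenProj m ζ v) :=
  isIdempotentElem_inv_natCast_smul hm <| geom_sum_mul_self_of_pow_eq_one <| by
    rw [smul_pow, hv, inv_pow, hζ, inv_one, one_smul]

theorem mul_eigenProj (hv : v ^ m = 1) (hζ : ζ ^ m = 1) :
    v * eigenProj m ζ v = ζ • eigenProj m ζ v := by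
  obtain rfl | hm := eq_or_ne m 0
  · simp [eigenProj]
  have hζ0 : ζ ≠ 0 := ne_zero_pow hm (hζ ▸ one_ne_zero)
  have hw : (ζ⁻¹ • v) ^ m = 1 := by rw [smul_pow, hv, inv_pow, hζ, inv_one, one_smul]
  rw [eigenProj, mul_smul_comm, smul_comm ζ]
  congr 1
  nth_rw 2 [← mul_geom_sum_of_pow_eq_one hw]
  rw [← smul_mul_assoc, smul_inv_smul₀ hζ0]

theorem sum_eigenProj (hm : (m : K) ≠ 0) (hω : IsPrimitiveRoot ω m) :
    ∑ j ∈ range m, eigenProj m (ω ^ j) v = 1 := by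
  have hm0 : 0 < m := Nat.pos_of_ne_zero (by rintro rfl; simp at hm)
  calc ∑ j ∈ range m, eigenProj m (ω ^ j) v
      = (m : K)⁻¹ • ∑ l ∈ range m, (∑ j ∈ range m, (ω⁻¹ ^ l) ^ j) • v ^ l := by
        simp only [eigenProj, ← smul_sum, smul_pow, sum_smul]
        rw [sum_comm]
        simp only [← pow_mul, inv_pow, mul_comm]
    _ = (m : K)⁻¹ • ((m : K) • v ^ 0) := by
        rw [sum_eq_single_of_mem 0 (mem_range.2 hm0) fun l hl hl0 => by
          rw [hω.inv.geom_sum_pow_eq_zero hl0 (mem_range.1 hl), zero_smul]]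
        simp
    _ = 1 := by rw [smul_smul, inv_mul_cancel₀ hm, one_smul, pow_zero]

end EigenProj

theorem exists_sum_smul_isIdempotentElem_of_isOfFinOrder {A : Type*} [Ring A] [Algebra ℂ A]
    {v : A} (hv : IsOfFinOrder v) :
    ∃ (s : Finset ℕ) (z : ℕ → ℂ) (P : ℕ → A), (∀ j ∈ s, ‖z j‖ = 1) ∧
      (∀ j ∈ s, IsIdempotentElem (P j)) ∧ ∑ j ∈ s, P j = 1 ∧ v = ∑ j ∈ s, z j • P j := by
  set m := orderOf v
  have hm : m ≠ 0 := hv.orderOf_pos.ne'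
  have hmC : (m : ℂ) ≠ 0 := Nat.cast_ne_zero.2 hm
  have hω := Complex.isPrimitiveRoot_exp m hm
  set ω := Complex.exp (2 * Real.pi * Complex.I / m)
  have hvm : v ^ m = 1 := pow_orderOf_eq_one v
  have hωj : ∀ j, (ω ^ j) ^ m = 1 := fun j => by
    rw [← pow_mul, mul_comm, pow_mul, hω.pow_eq_one, one_pow]
  have hsum : ∑ j ∈ range m, eigenProj m (ω ^ j) v = 1 := sum_eigenProj hmC hω
  refine ⟨range m, (ω ^ ·), (fun j => eigenProj m (ω ^ j) v), fun j _ => ?_,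
    fun j _ => isIdempotentElem_eigenProj hmC hvm (hωj j), hsum, ?_⟩
  · rw [norm_pow, hω.norm'_eq_one hm, one_pow]
  · calc v = v * ∑ j ∈ range m, eigenProj m (ω ^ j) v := by rw [hsum, mul_one]
      _ = _ := by rw [mul_sum]; exact sum_congr rfl fun j _ => mul_eigenProj hvm (hωj j)

namespace Complex

variable {ι : Type*} {s : Finset ι} {c : ι → ℂ} {z : ι → ℂ}

theorem norm_sum_mul_le_one (hc : ∀ i ∈ s, 0 ≤ c i) (hc1 : ∑ i ∈ s, c i = 1)
    (hz : ∀ i ∈ s, ‖z i‖ ≤ 1) : ‖∑ i ∈ s, c i * z i‖ ≤ 1 :=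
  calc ‖∑ i ∈ s, c i * z i‖ ≤ ∑ i ∈ s, (c i).re := by
        refine (norm_sum_le _ _).trans (sum_le_sum fun i hi => ?_)
        rw [norm_mul, re_eq_norm.2 (hc i hi)]
        exact mul_le_of_le_one_right (norm_nonneg _) (hz i hi)
    _ = 1 := by rw [← re_sum, hc1, one_re]

theorem eq_of_sum_mul_eq_of_norm_eq_one {w : ℂ} (hc : ∀ i ∈ s, 0 ≤ c i) (hc1 : ∑ i ∈ s, c i = 1)
    (hz : ∀ i ∈ s, ‖z i‖ ≤ 1) (hw : ‖w‖ = 1) (h : ∑ i ∈ s, c i * z i = w) {i : ι} (hi : i ∈ s)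
    (hci : c i ≠ 0) : z i = w := by
  set y : ι → ℂ := fun j => conj w * z j
  have hy : ∀ j ∈ s, ‖y j‖ ≤ 1 := fun j hj => by simpa [y, hw] using hz j hj
  have him : ∀ j ∈ s, (c j).im = 0 := fun j hj => (nonneg_iff.1 (hc j hj)).2.symm
  have hre : ∑ j ∈ s, (c j).re * (y j).re = 1 := by
    have := congrArg (fun x => (conj w * x).re) h
    simp only [mul_sum, re_sum, mul_left_comm (conj w), conj_mul', hw, ofReal_one, one_pow,
      one_re] at this
    rw [← this]
    exact sum_congr rfl fun j hj => by rw [mul_re (c j), him j hj, zero_mul, sub_zero]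
  have hslack : ∑ j ∈ s, (c j).re * (1 - (y j).re) = 0 := by
    simp only [mul_sub, mul_one, sum_sub_distrib, ← re_sum, hc1, one_re, hre, sub_self]
  have hyi : (y i).re = 1 := by
    have := (sum_eq_zero_iff_of_nonneg fun j hj => mul_nonneg (nonneg_iff.1 (hc j hj)).1
      (sub_nonneg.2 ((re_le_norm _).trans (hy j hj)))).1 hslack i hi
    have hci' : (c i).re ≠ 0 := fun h0 => hci (Complex.ext h0 (him i hi))
    linarith [(mul_eq_zero.1 this).resolve_left hci']
  have hyi1 : y i = 1 := by
    have hsq := normSq_eq_norm_sq (y i)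
    rw [normSq_apply, hyi] at hsq
    exact Complex.ext (by rw [hyi, one_re]) (by rw [one_im]; nlinarith [hy i hi, norm_nonneg (y i)])
  calc z i = w * y i := by simp only [y]; rw [← mul_assoc, mul_conj', hw]; simp
    _ = w := by rw [hyi1, mul_one]

end Complex

theorem Subgroup.sum_mul_sum_eq_card_smul {A : Type*} [Ring A] (H : Subgroup Aˣ) [Fintype H] :
    (∑ h : H, ((h : Aˣ) : A)) * ∑ h : H, ((h : Aˣ) : A) =
      Fintype.card H • ∑ h : H, ((h : Aˣ) : A) := by
  rw [sum_mul, ← card_univ, ← sum_const]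
  refine sum_congr rfl fun g _ => ?_
  rw [mul_sum]
  exact Fintype.sum_bijective (g * ·) (Group.mulLeft_bijective g) _ _ fun h => rfl

theorem augMap_single {G : Type*} [Group G] (g : G) (a : ℤ) : augMap G (single g a) = a := by
  simp [augMap]

namespace MonoidAlgebra

section Field

variable {k G : Type*} [Field k] [Group G] [Fintype G]

theorem trace_mulLeft (a : k[G]) :
    trace k k[G] (mulLeft k a) = Fintype.card G * a.coeff 1 := by
  rw [trace_eq_matrix_trace k (basis G k), Matrix.trace]
  simp only [Matrix.diag, toMatrix_apply, basis_apply, mulLeft_apply]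
  show ∑ g, (a * single g 1).coeff g = _
  simp [coeff_mul_single_apply]

theorem card_mul_coeff_one_eq_finrank {e : k[G]} (he : IsIdempotentElem e) :
    (Fintype.card G : k) * e.coeff 1 = Module.finrank k (range (mulLeft k e)) := by
  have hL : IsIdempotentElem (mulLeft k e) := he.map (Algebra.lmul k k[G])
  rw [← trace_mulLeft, hL.isProj_range.trace]

theorem eq_zero_of_isIdempotentElem_of_coeff_one_eq_zero [CharZero k] {e : k[G]}
    (he : IsIdempotentElem e) (h : e.coeff 1 = 0) : e = 0 := by
  have hL : IsIdempotentElem (mulLeft k e) := he.map (Algebra.lmul k k[G])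
  have : mulLeft k e = 0 := hL.trace_eq_zero_iff.1 <| by rw [trace_mulLeft, h, mul_zero]
  simpa using congr($this 1)

end Field

variable {G : Type*} [Group G] [Fintype G]

theorem coeff_one_nonneg_of_isIdempotentElem {e : ℂ[G]} (he : IsIdempotentElem e) :
    0 ≤ e.coeff 1 := by
  have hN : (Fintype.card G : ℂ) ≠ 0 := Nat.cast_ne_zero.2 Fintype.card_ne_zero
  rw [eq_div_of_mul_eq hN ((mul_comm _ _).trans (card_mul_coeff_one_eq_finrank he))]
  rw [← Complex.ofReal_natCast, ← Complex.ofReal_natCast, ← Complex.ofReal_div]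
  exact Complex.zero_le_real.2 (by positivity)

theorem norm_coeff_one_le_one_of_isOfFinOrder {v : ℂ[G]} (hv : IsOfFinOrder v) :
    ‖v.coeff 1‖ ≤ 1 := by
  obtain ⟨s, z, P, hz, hP, hsum, hvP⟩ := exists_sum_smul_isIdempotentElem_of_isOfFinOrder hv
  have hc1 : ∑ j ∈ s, (P j).coeff 1 = 1 := by
    simpa [coeff_sum, Finsupp.finsetSum_apply] using congr(($hsum).coeff 1)
  have hw : ∑ j ∈ s, (P j).coeff 1 * z j = v.coeff 1 := by
    simp [hvP, coeff_sum, Finsupp.finsetSum_apply, mul_comm]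
  exact hw ▸ Complex.norm_sum_mul_le_one
    (fun j hj => coeff_one_nonneg_of_isIdempotentElem (hP j hj)) hc1 fun j hj => (hz j hj).le

theorem eq_coeff_one_smul_one_of_isOfFinOrder {v : ℂ[G]} (hv : IsOfFinOrder v)
    (h1 : ‖v.coeff 1‖ = 1) : v = v.coeff 1 • 1 := by
  obtain ⟨s, z, P, hz, hP, hsum, hvP⟩ := exists_sum_smul_isIdempotentElem_of_isOfFinOrder hv
  have hc : ∀ j ∈ s, 0 ≤ (P j).coeff 1 := fun j hj => coeff_one_nonneg_of_isIdempotentElem (hP j hj)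
  have hc1 : ∑ j ∈ s, (P j).coeff 1 = 1 := by
    simpa [coeff_sum, Finsupp.finsetSum_apply] using congr(($hsum).coeff 1)
  have hw : ∑ j ∈ s, (P j).coeff 1 * z j = v.coeff 1 := by
    simp [hvP, coeff_sum, Finsupp.finsetSum_apply, mul_comm]
  have hPz : ∀ j ∈ s, z j • P j = v.coeff 1 • P j := fun j hj => by
    by_cases hj0 : (P j).coeff 1 = 0
    · rw [eq_zero_of_isIdempotentElem_of_coeff_one_eq_zero (hP j hj) hj0, smul_zero, smul_zero]
    · rw [Complex.eq_of_sum_mul_eq_of_norm_eq_one hc hc1 (fun j hj => (hz j hj).le) h1 hw hj hj0]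
  calc v = ∑ j ∈ s, z j • P j := hvP
    _ = ∑ j ∈ s, v.coeff 1 • P j := sum_congr rfl hPz
    _ = v.coeff 1 • 1 := by rw [← smul_sum, hsum]

theorem eq_single_one_coeff_one_of_isOfFinOrder {u : ℤ[G]} (hu : IsOfFinOrder u)
    (h1 : u.coeff 1 ≠ 0) : u = single 1 (u.coeff 1) := by
  set f := mapRingHom G (Int.castRingHom ℂ)
  have hv : IsOfFinOrder (f u) := f.toMonoidHom.isOfFinOrder hu
  have hcoeff : (f u).coeff 1 = u.coeff 1 := coeff_mapRingHom _ _ _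
  have habs : |u.coeff 1| = 1 := by
    have := norm_coeff_one_le_one_of_isOfFinOrder hv
    rw [hcoeff, Complex.norm_intCast, ← Int.cast_abs] at this
    exact le_antisymm (by exact_mod_cast this) (Int.one_le_abs h1)
  have hscalar := eq_coeff_one_smul_one_of_isOfFinOrder hv
    (by rw [hcoeff, Complex.norm_intCast, ← Int.cast_abs, habs, Int.cast_one])
  have hinj : Function.Injective f := map_injective _ Int.cast_injective
  apply hinj
  rw [hscalar, hcoeff, mapRingHom_single]
  simp [one_def]

theorem card_dvd_card_of_coeff_one_eq_zero (H : Subgroup ℤ[G]ˣ) [Finite H]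
    (hH : ∀ u ∈ H, u ≠ 1 → (u : ℤ[G]).coeff 1 = 0) : Nat.card H ∣ Nat.card G := by
  have := Fintype.ofFinite H
  set f := mapRingHom G (Int.castRingHom ℚ)
  set n := Fintype.card H
  set S := ∑ h : H, f ((h : ℤ[G]ˣ) : ℤ[G])
  have hn : (n : ℚ) ≠ 0 := Nat.cast_ne_zero.2 Fintype.card_ne_zero
  have hS : S * S = n • S := by
    simp only [S, ← map_sum, ← map_mul, H.sum_mul_sum_eq_card_smul, map_nsmul, n]
  have hS1 : S.coeff 1 = 1 := by
    simp only [S, f, coeff_sum, Finsupp.finsetSum_apply, coeff_mapRingHom]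
    rw [sum_eq_single 1 (fun h _ hne => by rw [hH h h.2 (by simpa using hne), map_zero])
      (fun h => absurd (mem_univ 1) h)]
    simp [one_def]
  have hrank := card_mul_coeff_one_eq_finrank (isIdempotentElem_inv_natCast_smul hn hS)
  rw [coeff_smul, Finsupp.smul_apply, hS1, smul_eq_mul, mul_one, ← div_eq_mul_inv,
    div_eq_iff hn] at hrank
  rw [Nat.card_eq_fintype_card, Nat.card_eq_fintype_card]
  exact ⟨_, by exact_mod_cast hrank.trans (mul_comm _ _)⟩

end MonoidAlgebra

/-- The order of any finite subgroup of `V(ℤG)` divides the order of `G`. -/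
theorem stmt14 {G : Type*} [Group G] [Fintype G]
    (H : Subgroup (MonoidAlgebra ℤ G)ˣ) (hHV : H ≤ V G) (hfin : Finite H) :
    Nat.card H ∣ Nat.card G := by
  refine card_dvd_card_of_coeff_one_eq_zero H fun u hu hne => ?_
  by_contra h1
  have hu_fin : IsOfFinOrder (u : ℤ[G]) := by
    have := H.subtype.isOfFinOrder (isOfFinOrder_of_finite (⟨u, hu⟩ : H))
    exact Units.isOfFinOrder_val.2 this
  have hscalar := eq_single_one_coeff_one_of_isOfFinOrder hu_fin h1
  have haug : augMap G (u : ℤ[G]) = 1 := congr(Units.val $(MonoidHom.mem_ker.1 (hHV hu)))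
  rw [hscalar, augMap_single] at haug
  exact hne (Units.ext (by rw [hscalar, haug, Units.val_one, one_def]))
end
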